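/- Let 𝒜 be a null family of pairwise disjoint nonempty compact subsets of a metric space M. Then the associated decomposition of M, consisting of the members of 𝒜 together with all singletons {x} for x ∈ M not lying in any member of 𝒜, is upper semicontinuous. -/

import Mathlib

/-- A decomposition of a space `M`: a partition of `M` into nonempty subsets. -/
def IsDecomposition {M : Type*} (𝒟 : Set (Set M)) : Prop :=
  (∀ D ∈ 𝒟, D.Nonempty) ∧ ∀ x : M, ∃! D, D ∈ 𝒟 ∧ x ∈ D

/-- A decomposition of a Hausdorff space is upper semicontinuous if each member is
compact and, for each member `D` and open `U ⊇ D`, there is an open `V ⊇ D` such that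
every member meeting `V` is contained in `U`. -/
def IsUSCDecomposition {M : Type*} [TopologicalSpace M] (𝒟 : Set (Set M)) : Prop :=
  (∀ D ∈ 𝒟, IsCompact D) ∧
    ∀ D ∈ 𝒟, ∀ U : Set M, IsOpen U → D ⊆ U →
      ∃ V : Set M, IsOpen V ∧ D ⊆ V ∧ ∀ D' ∈ 𝒟, (D' ∩ V).Nonempty → D' ⊆ U

/-!
Given a member `D` of the decomposition inside an open set `U`, choose `δ > 0` with the
`δ`-thickening of `D` inside `U`. Only finitely many members of the null family have diameter
above `δ / 3`; the union of those among them that are not contained in `U` is closed and misses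
`D`. Removing it from the `δ / 3`-thickening of `D` gives `V`: a member meeting `V` either lies
in `U` or has diameter at most `δ / 3`, and is then trapped in the `δ`-thickening of `D`.
-/

open Metric

def IsNullFamily {M : Type*} [PseudoMetricSpace M] (𝒜 : Set (Set M)) : Prop :=
  ∀ ε : ℝ, 0 < ε → {A ∈ 𝒜 | ε < diam A}.Finite

def decompositionOf {M : Type*} (𝒜 : Set (Set M)) : Set (Set M) :=
  𝒜 ∪ {S : Set M | ∃ x : M, x ∉ ⋃₀ 𝒜 ∧ S = {x}}

section NullFamily

variable {M : Type*} [PseudoMetricSpace M] {𝒜 ℬ : Set (Set M)}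

theorem IsNullFamily.union (h𝒜 : IsNullFamily 𝒜) (hℬ : IsNullFamily ℬ) :
    IsNullFamily (𝒜 ∪ ℬ) := fun ε hε =>
  ((h𝒜 ε hε).union (hℬ ε hε)).subset fun _ ⟨hA, hεA⟩ => hA.imp (⟨·, hεA⟩) (⟨·, hεA⟩)

theorem isNullFamily_of_forall_subsingleton (h𝒜 : ∀ A ∈ 𝒜, A.Subsingleton) :
    IsNullFamily 𝒜 := fun ε hε => by
  convert Set.finite_empty
  refine Set.eq_empty_of_forall_notMem fun A ⟨hA, hεA⟩ => ?_
  rw [diam_subsingleton (h𝒜 A hA)] at hεA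
  exact hεA.not_gt hε

theorem subset_thickening_of_diam_lt {A K : Set M} {y : M} {r s : ℝ}
    (hA : Bornology.IsBounded A) (hdiam : diam A < r) (hyA : y ∈ A)
    (hyK : y ∈ thickening s K) : A ⊆ thickening (r + s) K := fun _ hz =>
  thickening_thickening_subset r s K <| mem_thickening_iff.2
    ⟨y, hyK, (dist_le_diam_of_mem hA hz hyA).trans_lt hdiam⟩

theorem IsNullFamily.exists_isOpen_superset_forall_inter_nonempty_subset
    (h𝒜 : IsNullFamily 𝒜) (hclosed : ∀ A ∈ 𝒜, IsClosed A)
    (hbdd : ∀ A ∈ 𝒜, Bornology.IsBounded A) {K U : Set M} (hK : IsCompact K) (hU : IsOpen U)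
    (hKU : K ⊆ U) (hmeet : ∀ A ∈ 𝒜, (A ∩ K).Nonempty → A ⊆ U) :
    ∃ V : Set M, IsOpen V ∧ K ⊆ V ∧ ∀ A ∈ 𝒜, (A ∩ V).Nonempty → A ⊆ U := by
  obtain ⟨δ, hδ, hKδ⟩ := hK.exists_thickening_subset_open hU hKU
  set F := {A ∈ 𝒜 | δ / 3 < diam A ∧ ¬A ⊆ U}
  have hF : F.Finite := (h𝒜 (δ / 3) (by positivity)).subset fun A hA => ⟨hA.1, hA.2.1⟩
  have hFclosed : IsClosed (⋃₀ F) :=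
    Set.sUnion_eq_biUnion ▸ hF.isClosed_biUnion fun A hA => hclosed A hA.1
  refine ⟨thickening (δ / 3) K \ ⋃₀ F, isOpen_thickening.sdiff hFclosed, ?_, ?_⟩
  · intro x hx
    refine ⟨self_subset_thickening (by positivity) K hx, ?_⟩
    rintro ⟨A, hAF, hxA⟩
    exact hAF.2.2 (hmeet A hAF.1 ⟨x, hxA, hx⟩)
  · rintro A hA ⟨y, hyA, hyK, hyF⟩
    by_contra hAU
    have hdiam : diam A ≤ δ / 3 := not_lt.1 fun hlt => hyF ⟨A, ⟨hA, hlt, hAU⟩, hyA⟩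
    have hsub := subset_thickening_of_diam_lt (hbdd A hA) (by linarith : diam A < δ / 2) hyA hyK
    exact hAU (hsub.trans ((thickening_mono (by linarith) K).trans hKδ))

end NullFamily

section Decomposition

variable {M : Type*} {𝒜 : Set (Set M)}

theorem Set.PairwiseDisjoint.decompositionOf (h𝒜 : 𝒜.PairwiseDisjoint id) :
    (decompositionOf 𝒜).PairwiseDisjoint id := by
  refine h𝒜.union ?_ ?_
  · rintro _ ⟨x, -, rfl⟩ _ ⟨y, -, rfl⟩ hxy
    exact Set.disjoint_singleton.2 fun h => hxy (h ▸ rfl)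
  · rintro A hA _ ⟨x, hx, rfl⟩ -
    exact Set.disjoint_singleton_right.2 fun hxA => hx ⟨A, hA, hxA⟩

theorem isCompact_of_mem_decompositionOf [TopologicalSpace M] (h𝒜 : ∀ A ∈ 𝒜, IsCompact A)
    {D : Set M} (hD : D ∈ decompositionOf 𝒜) : IsCompact D := by
  rcases hD with hD | ⟨x, -, rfl⟩
  exacts [h𝒜 D hD, isCompact_singleton]

theorem IsNullFamily.decompositionOf [PseudoMetricSpace M] (h𝒜 : IsNullFamily 𝒜) :
    IsNullFamily (decompositionOf 𝒜) :=
  h𝒜.union <| isNullFamily_of_forall_subsingleton fun _ ⟨_, _, hS⟩ =>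
    hS ▸ Set.subsingleton_singleton

end Decomposition

theorem nullFamily_decomposition_usc_general {M : Type*} [MetricSpace M] (𝒜 : Set (Set M))
    (hcpt : ∀ A ∈ 𝒜, IsCompact A)
    (hdisj : 𝒜.PairwiseDisjoint id)
    (hnull : ∀ ε : ℝ, 0 < ε → {A ∈ 𝒜 | ε < Metric.diam A}.Finite) :
    IsUSCDecomposition (𝒜 ∪ {S : Set M | ∃ x : M, x ∉ ⋃₀ 𝒜 ∧ S = {x}}) := by
  show IsUSCDecomposition (decompositionOf 𝒜)
  have h𝒟cpt : ∀ D ∈ decompositionOf 𝒜, IsCompact D := fun _ =>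
    isCompact_of_mem_decompositionOf hcpt
  refine ⟨h𝒟cpt, fun D hD U hU hDU => ?_⟩
  refine (IsNullFamily.decompositionOf hnull).exists_isOpen_superset_forall_inter_nonempty_subset
    (fun A hA => (h𝒟cpt A hA).isClosed) (fun A hA => (h𝒟cpt A hA).isBounded) (h𝒟cpt D hD)
    hU hDU ?_
  rintro D' hD' ⟨x, hxD', hxD⟩
  rwa [hdisj.decompositionOf.elim_set hD' hD x hxD' hxD]

/-- The decomposition of a metric space associated to a null family of pairwise
disjoint nonempty compact subsets (consisting of the members of the family together
with the singletons of the remaining points) is upper semicontinuous. -/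
theorem nullFamily_decomposition_usc {M : Type*} [MetricSpace M] (𝒜 : Set (Set M))
    (hne : ∀ A ∈ 𝒜, A.Nonempty) (hcpt : ∀ A ∈ 𝒜, IsCompact A)
    (hdisj : 𝒜.PairwiseDisjoint id)
    (hnull : ∀ ε : ℝ, 0 < ε → {A ∈ 𝒜 | ε < Metric.diam A}.Finite) :
    IsUSCDecomposition (𝒜 ∪ {S : Set M | ∃ x : M, x ∉ ⋃₀ 𝒜 ∧ S = {x}}) :=
  nullFamily_decomposition_usc_general 𝒜 hcpt hdisj hnull
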